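/- For all integers m ≥ 3, n ≥ 2, k ≥ 2 with m − k ≥ 1 and every signature σ : E(B(m,n,k)) → {+1,−1}, we have χ'(B(m,n,k),σ) = n+1 = Δ(B(m,n,k)); in other words, every signed generalized book graph is class 1. -/

import Mathlib

open scoped Classical

/-- The color set `M_q`: for `q = 2r`, `{±1, …, ±r}`; for `q = 2r+1`, `{0, ±1, …, ±r}`. -/
def colorSet (q : ℕ) : Set ℤ :=
  {c : ℤ | c.natAbs ≤ q / 2 ∧ (Even q → c ≠ 0)}

/-- A proper `q`-edge coloring of the signed graph `(G, σ)`, given as an assignment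
`γ v w` of a color to the incidence `(v, vw)`. -/
def IsProperSignedEdgeColoring {V : Type*} (G : SimpleGraph V)
    (σ : Sym2 V → ℤˣ) (q : ℕ) (γ : V → V → ℤ) : Prop :=
  (∀ ⦃v w : V⦄, G.Adj v w → γ v w ∈ colorSet q) ∧
  (∀ ⦃v w : V⦄, G.Adj v w → γ v w = (-(σ s(v, w) : ℤ)) * γ w v) ∧
  (∀ ⦃v w₁ w₂ : V⦄, G.Adj v w₁ → G.Adj v w₂ → w₁ ≠ w₂ → γ v w₁ ≠ γ v w₂)

/-- The chromatic index of a signed graph: the least `q` admitting a proper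
`q`-edge coloring. -/
noncomputable def signedChromaticIndex {V : Type*} (G : SimpleGraph V)
    (σ : Sym2 V → ℤˣ) : ℕ :=
  sInf {q : ℕ | ∃ γ : V → V → ℤ, IsProperSignedEdgeColoring G σ q γ}

/-- Vertices of the generalized book graph `B(m,n,k)`: the spine path `v₁ … v_k`
(`Sum.inl`) together with the internal vertices `u_j^i` of the `n` pages (`Sum.inr`). -/
abbrev BookVertex (m n k : ℕ) : Type := Fin k ⊕ Fin n × Fin (m - k)

/-- The generalized book graph `B(m,n,k)`: `n` cycles of length `m` sharing the
common path `v₁ v₂ ⋯ v_k`, the `i`-th cycle being `v₁ u₁ⁱ u₂ⁱ ⋯ u_{m-k}ⁱ v_k ⋯ v₂ v₁`. -/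
def bookGraph (m n k : ℕ) : SimpleGraph (BookVertex m n k) :=
  SimpleGraph.fromRel (fun x y =>
    match x, y with
    | Sum.inl a, Sum.inl b => (b : ℕ) = (a : ℕ) + 1
    | Sum.inl a, Sum.inr p =>
        ((a : ℕ) = 0 ∧ (p.2 : ℕ) = 0) ∨ ((a : ℕ) = k - 1 ∧ (p.2 : ℕ) = m - k - 1)
    | Sum.inr p, Sum.inr p' => p.1 = p'.1 ∧ (p'.2 : ℕ) = (p.2 : ℕ) + 1
    | Sum.inr _, Sum.inl _ => False)

/-- The signature `σ_l` on `B(m,n,k)` whose negative edges are exactly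
`v₁u₁ⁱ` for `1 ≤ i ≤ l`. -/
noncomputable def bookSigma (m n k l : ℕ) (hk : 0 < k) (hmk : 0 < m - k) :
    Sym2 (BookVertex m n k) → ℤˣ :=
  fun e =>
    if ∃ i : Fin n, (i : ℕ) < l ∧
        e = s(Sum.inl (⟨0, hk⟩ : Fin k),
              Sum.inr ((i, ⟨0, hmk⟩) : Fin n × Fin (m - k)))
    then -1 else 1

noncomputable instance (m n k : ℕ) : DecidableRel (bookGraph m n k).Adj :=
  fun _ _ => Classical.propDecidable _

/-!
The lower bound is the degree `n + 1` of `v₁`, since at a vertex all incidences get distinct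
colours. For the upper bound, colour the spine `v₁ ⋯ v_k` greedily starting with colour `1` at
`v₁`: with at least three colours each new incidence only has to avoid the colour just placed
opposite it. At `v₁` the `n` pages receive the `n` colours other than `1`; at `v_k` they receive
the `n` colours other than the one the spine uses there, distributed by Hall's theorem so that
a page with a single inner vertex never sees one colour twice at it. What remains of each page is
a path with both end incidences precoloured, which is again coloured greedily, the incidence
before the last inner vertex also avoiding the one colour that would clash there.
-/

open Finset SimpleGraph

section Colors

variable {q : ℕ}

noncomputable def colorFinset (q : ℕ) : Finset ℤ :=
  if Even q then (Icc (-((q / 2 : ℕ) : ℤ)) (q / 2 : ℕ)).erase 0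
  else Icc (-((q / 2 : ℕ) : ℤ)) (q / 2 : ℕ)

theorem mem_colorFinset {c : ℤ} : c ∈ colorFinset q ↔ c ∈ colorSet q := by
  unfold colorFinset colorSet
  split_ifs with hq <;>
    simp only [mem_erase, mem_Icc, Set.mem_ofPred_eq, hq, true_implies, false_implies,
      and_true] <;>
    omega

theorem card_colorFinset (q : ℕ) : #(colorFinset q) = q := by
  unfold colorFinset
  split_ifs with hq
  · obtain ⟨r, rfl⟩ := hq
    rw [card_erase_of_mem (by simp; omega), Int.card_Icc]
    omega
  · obtain ⟨r, rfl⟩ := Nat.not_even_iff_odd.mp hq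
    rw [Int.card_Icc]
    omega

theorem neg_units_mul_mem_colorSet (u : ℤˣ) {c : ℤ} (hc : c ∈ colorSet q) :
    -(u : ℤ) * c ∈ colorSet q := by
  rcases Int.units_eq_one_or u with rfl | rfl <;> simpa [colorSet] using hc

theorem exists_mem_colorSet_ne_ne (hq : 3 ≤ q) (x y : ℤ) :
    ∃ c ∈ colorSet q, c ≠ x ∧ c ≠ y := by
  have hcard : 0 < #(((colorFinset q).erase x).erase y) := by
    have h₁ := pred_card_le_card_erase (s := (colorFinset q).erase x) (a := y)
    have h₂ := pred_card_le_card_erase (s := colorFinset q) (a := x)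
    rw [card_colorFinset] at h₂
    omega
  obtain ⟨c, hc⟩ := card_pos.mp hcard
  simp only [mem_erase, mem_colorFinset] at hc
  exact ⟨c, hc.2.2, hc.2.1, hc.1⟩

theorem exists_injective_colorSet_ne_one {n : ℕ} (hn : 2 ≤ n) :
    ∃ a : Fin n → ℤ, Function.Injective a ∧ (∀ i, a i ∈ colorSet (n + 1) ∧ a i ≠ 1) ∧
      ∃ i j, (a i).natAbs ≠ (a j).natAbs := by
  have h_one : (1 : ℤ) ∈ colorFinset (n + 1) := mem_colorFinset.mpr (by simp [colorSet]; omega)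
  have hS : #((colorFinset (n + 1)).erase 1) = n := by
    rw [card_erase_of_mem h_one, card_colorFinset, Nat.add_sub_cancel]
  let e := (equivFinOfCardEq hS).symm
  have hneg : (-1 : ℤ) ∈ (colorFinset (n + 1)).erase 1 :=
    mem_erase.mpr ⟨by norm_num, mem_colorFinset.mpr (by simp [colorSet]; omega)⟩
  obtain ⟨y, hy, hy₁⟩ := exists_mem_ne (by rw [hS]; omega) (-1)
  refine ⟨fun i => e i, Subtype.val_injective.comp e.injective, fun i =>
    ⟨mem_colorFinset.mp (mem_of_mem_erase (e i).2), ne_of_mem_erase (e i).2⟩,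
    e.symm ⟨-1, hneg⟩, e.symm ⟨y, hy⟩, ?_⟩
  have hy₂ := ne_of_mem_erase hy
  simp only [Equiv.apply_symm_apply]
  omega

end Colors

theorem neg_units_mul_neg_units_mul (u : ℤˣ) (x : ℤ) : -(u : ℤ) * (-(u : ℤ) * x) = x := by
  rcases Int.units_eq_one_or u with rfl | rfl <;> simp

theorem neg_units_mul_eq_iff (u : ℤˣ) {x y : ℤ} : -(u : ℤ) * x = y ↔ x = -(u : ℤ) * y := by
  constructor <;> rintro rfl <;> rw [neg_units_mul_neg_units_mul]

section SignedColoring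

variable {V : Type*} {G : SimpleGraph V} {σ : Sym2 V → ℤˣ} {q : ℕ} {γ : V → V → ℤ}

theorem IsProperSignedEdgeColoring.degree_le (h : IsProperSignedEdgeColoring G σ q γ) (v : V)
    [Fintype (G.neighborSet v)] : G.degree v ≤ q := by
  rw [← card_neighborFinset_eq_degree, ← card_colorFinset q]
  refine card_le_card_of_injOn (γ v) (fun w hw => ?_) (fun w₁ hw₁ w₂ hw₂ he => ?_)
  · rw [mem_coe, mem_neighborFinset] at hw
    exact mem_colorFinset.mpr (h.1 hw)
  · rw [mem_coe, mem_neighborFinset] at hw₁ hw₂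
    by_contra hne
    exact h.2.2 hw₁ hw₂ hne he

theorem IsProperSignedEdgeColoring.maxDegree_le [Fintype V] [DecidableRel G.Adj]
    (h : IsProperSignedEdgeColoring G σ q γ) : G.maxDegree ≤ q :=
  maxDegree_le_of_forall_degree_le G q fun v => h.degree_le v

theorem signedChromaticIndex_eq_maxDegree [Fintype V] [DecidableRel G.Adj]
    (h : IsProperSignedEdgeColoring G σ G.maxDegree γ) :
    signedChromaticIndex G σ = G.maxDegree :=
  le_antisymm (Nat.sInf_le ⟨γ, h⟩) (le_csInf ⟨_, γ, h⟩ fun _ ⟨_, h'⟩ => h'.maxDegree_le)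

noncomputable def orientedColoring (σ : Sym2 V → ℤˣ) (D : V → V → Prop) (f : V → V → ℤ)
    (v w : V) : ℤ :=
  if D v w then f v w else -(σ s(v, w) : ℤ) * f w v

variable {D : V → V → Prop} {f : V → V → ℤ}

theorem orientedColoring_of_arc {v w : V} (h : D v w) : orientedColoring σ D f v w = f v w :=
  if_pos h

theorem orientedColoring_of_not_arc {v w : V} (h : ¬ D v w) :
    orientedColoring σ D f v w = -(σ s(v, w) : ℤ) * f w v :=
  if_neg h

theorem isProperSignedEdgeColoring_orientedColoring (hD : ∀ ⦃v w⦄, D v w → ¬ D w v)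
    (hf : ∀ ⦃v w⦄, D v w → f v w ∈ colorSet q)
    (hinj : ∀ ⦃v w₁ w₂⦄, (fromRel D).Adj v w₁ → (fromRel D).Adj v w₂ → w₁ ≠ w₂ →
      orientedColoring σ D f v w₁ ≠ orientedColoring σ D f v w₂) :
    IsProperSignedEdgeColoring (fromRel D) σ q (orientedColoring σ D f) := by
  refine ⟨fun v w hvw => ?_, fun v w hvw => ?_, hinj⟩
  · rw [fromRel_adj] at hvw
    by_cases h : D v w
    · rw [orientedColoring_of_arc h]
      exact hf h
    · rw [orientedColoring_of_not_arc h]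
      exact neg_units_mul_mem_colorSet _ (hf (hvw.2.resolve_left h))
  · rw [fromRel_adj] at hvw
    rcases hvw.2 with h | h
    · rw [orientedColoring_of_arc h, orientedColoring_of_not_arc (hD h), Sym2.eq_swap,
        neg_units_mul_neg_units_mul]
    · rw [orientedColoring_of_not_arc (hD h), orientedColoring_of_arc h]

end SignedColoring

theorem exists_injective_forall_mem_ne {ι α : Type*} [Fintype ι] (S : Finset α) (f : ι → α)
    (hS : Fintype.card ι ≤ #S) (hf : ∃ i j, f i ≠ f j) :
    ∃ t : ι → α, Function.Injective t ∧ ∀ i, t i ∈ S ∧ t i ≠ f i := by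
  have hall : ∀ u : Finset ι, #u ≤ #(u.biUnion fun i => S.erase (f i)) := by
    intro u
    by_cases hu : u = univ
    · obtain ⟨i, j, hij⟩ := hf
      have hcover : S ⊆ univ.biUnion fun i => S.erase (f i) := fun x hx => by
        rcases eq_or_ne x (f i) with rfl | hxi
        · exact mem_biUnion.mpr ⟨j, mem_univ _, mem_erase.mpr ⟨hij, hx⟩⟩
        · exact mem_biUnion.mpr ⟨i, mem_univ _, mem_erase.mpr ⟨hxi, hx⟩⟩
      rw [hu, card_univ]
      exact hS.trans (card_le_card hcover)
    · obtain rfl | ⟨i, hi⟩ := u.eq_empty_or_nonempty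
      · simp
      have hlt : #u < Fintype.card ι := (card_lt_iff_ne_univ u).mpr hu
      calc #u ≤ #S - 1 := by omega
        _ ≤ #(S.erase (f i)) := pred_card_le_card_erase
        _ ≤ _ := card_le_card (subset_biUnion_of_mem (fun i => S.erase (f i)) hi)
  obtain ⟨t, ht, hmem⟩ := (all_card_le_biUnion_card_iff_existsInjective' _).mp hall
  exact ⟨t, ht, fun i => ⟨mem_of_mem_erase (hmem i), ne_of_mem_erase (hmem i)⟩⟩

/-! A colouring of a signed walk with signs `s j` is recorded by the colours `c j` that its
edges receive at their tails; the `j`-th edge then has colour `-(s j) * c j` at its head. -/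

theorem exists_signed_walk_coloring {q : ℕ} (hq : 3 ≤ q) (s : ℕ → ℤˣ) (x : ℕ → ℤ) {a : ℤ}
    (ha : a ∈ colorSet q) :
    ∃ c : ℕ → ℤ, c 0 = a ∧
      ∀ j, c j ∈ colorSet q ∧ c (j + 1) ≠ -(s j : ℤ) * c j ∧ c (j + 1) ≠ x j := by
  choose pick hpick using exists_mem_colorSet_ne_ne hq
  let c : ℕ → ℤ := fun j => Nat.rec a (fun j cj => pick (-(s j : ℤ) * cj) (x j)) j
  refine ⟨c, rfl, fun j => ⟨?_, (hpick _ _).2.1, (hpick _ _).2.2⟩⟩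
  cases j
  · exact ha
  · exact (hpick _ _).1

theorem exists_signed_path_coloring {q : ℕ} (hq : 3 ≤ q) (s : ℕ → ℤˣ) {a : ℤ}
    (ha : a ∈ colorSet q) (b : ℤ) {p : ℕ} (hp : 1 ≤ p)
    (h₁ : p = 1 → -(s 0 : ℤ) * a ≠ -(s 1 : ℤ) * b) :
    ∃ c : ℕ → ℤ, c 0 = a ∧ (∀ j, c j ∈ colorSet q) ∧ (∀ j, c (j + 1) ≠ -(s j : ℤ) * c j) ∧
      -(s (p - 1) : ℤ) * c (p - 1) ≠ -(s p : ℤ) * b := by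
  obtain ⟨c, hc₀, hc⟩ :=
    exists_signed_walk_coloring hq s (fun j => -(s (j + 1) : ℤ) * (-(s (j + 2) : ℤ) * b)) ha
  refine ⟨c, hc₀, fun j => (hc j).1, fun j => (hc j).2.1, ?_⟩
  rcases Nat.lt_or_ge p 2 with hp₁ | hp₂
  · obtain rfl : p = 1 := by omega
    rw [hc₀]
    exact h₁ rfl
  · obtain ⟨p, rfl⟩ := Nat.exists_eq_add_of_le' hp₂
    rw [Ne, neg_units_mul_eq_iff]
    exact (hc p).2.2

section Book

variable {m n k : ℕ}

-- The relation `bookGraph` is built from, read as an orientation: the spine runs from `v₁` to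
-- `v_k`, and the `i`-th page runs from both `v₁` and `v_k` towards `u_{m-k}ⁱ`.
def bookArc (m n k : ℕ) : BookVertex m n k → BookVertex m n k → Prop
  | Sum.inl a, Sum.inl b => (b : ℕ) = (a : ℕ) + 1
  | Sum.inl a, Sum.inr p =>
      ((a : ℕ) = 0 ∧ (p.2 : ℕ) = 0) ∨ ((a : ℕ) = k - 1 ∧ (p.2 : ℕ) = m - k - 1)
  | Sum.inr p, Sum.inr p' => p.1 = p'.1 ∧ (p'.2 : ℕ) = (p.2 : ℕ) + 1
  | Sum.inr _, Sum.inl _ => False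

theorem bookGraph_eq_fromRel : bookGraph m n k = fromRel (bookArc m n k) := rfl

theorem bookArc_asymm : ∀ ⦃v w : BookVertex m n k⦄, bookArc m n k v w → ¬ bookArc m n k w v
  | Sum.inl _, Sum.inl _ => by simp only [bookArc]; omega
  | Sum.inl _, Sum.inr _ => by simp [bookArc]
  | Sum.inr _, Sum.inl _ => by simp [bookArc]
  | Sum.inr _, Sum.inr _ => by simp only [bookArc]; omega

theorem bookGraph_adj_inl_inl {a b : Fin k} :
    (bookGraph m n k).Adj (Sum.inl a) (Sum.inl b) ↔ (b : ℕ) = a + 1 ∨ (a : ℕ) = b + 1 := by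
  simp only [bookGraph_eq_fromRel, fromRel_adj, bookArc, ne_eq, Sum.inl.injEq, Fin.ext_iff]
  omega

theorem bookGraph_adj_inl_inr {a : Fin k} {i : Fin n} {j : Fin (m - k)} :
    (bookGraph m n k).Adj (Sum.inl a) (Sum.inr (i, j)) ↔
      ((a : ℕ) = 0 ∧ (j : ℕ) = 0) ∨ ((a : ℕ) = k - 1 ∧ (j : ℕ) = m - k - 1) := by
  simp [bookGraph_eq_fromRel, fromRel_adj, bookArc]

theorem bookGraph_adj_inr_inl {a : Fin k} {i : Fin n} {j : Fin (m - k)} :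
    (bookGraph m n k).Adj (Sum.inr (i, j)) (Sum.inl a) ↔
      ((a : ℕ) = 0 ∧ (j : ℕ) = 0) ∨ ((a : ℕ) = k - 1 ∧ (j : ℕ) = m - k - 1) := by
  rw [SimpleGraph.adj_comm, bookGraph_adj_inl_inr]

theorem bookGraph_adj_inr_inr {i i' : Fin n} {j j' : Fin (m - k)} :
    (bookGraph m n k).Adj (Sum.inr (i, j)) (Sum.inr (i', j')) ↔
      i = i' ∧ ((j' : ℕ) = j + 1 ∨ (j : ℕ) = j' + 1) := by
  simp only [bookGraph_eq_fromRel, fromRel_adj, bookArc, ne_eq, Sum.inr.injEq, Prod.mk.injEq,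
    Fin.ext_iff]
  omega

section Signs

variable [NeZero k]

-- The `i`-th page as a path indexed from `0` (`v₁`) to `m - k + 1` (`v_k`).
def pageVertex (i : Fin n) (j : ℕ) : BookVertex m n k :=
  if h₀ : j = 0 then Sum.inl 0
  else if h : j ≤ m - k then Sum.inr (i, ⟨j - 1, by omega⟩) else Sum.inl (Fin.ofNat k (k - 1))

theorem pageVertex_zero (i : Fin n) : (pageVertex i 0 : BookVertex m n k) = Sum.inl 0 := rfl

theorem pageVertex_eq_inr (i : Fin n) {r : ℕ} (j : Fin (m - k)) (h : r = j + 1) :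
    (pageVertex i r : BookVertex m n k) = Sum.inr (i, j) := by
  rw [pageVertex, dif_neg (by omega), dif_pos (by omega)]
  congr 2
  exact Fin.ext (by simp only; omega)

theorem pageVertex_last (i : Fin n) :
    (pageVertex i (m - k + 1) : BookVertex m n k) = Sum.inl (Fin.ofNat k (k - 1)) := by
  rw [pageVertex, dif_neg (by omega), dif_neg (by omega)]

variable (σ : Sym2 (BookVertex m n k) → ℤˣ)

-- `Fin.ofNat` reduces modulo `k`, so this is the sign of `v_{a+1} v_{a+2}` only for `a + 1 < k`.
def spineSign (a : ℕ) : ℤˣ := σ s(Sum.inl (Fin.ofNat k a), Sum.inl (Fin.ofNat k (a + 1)))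

def pageSign (i : Fin n) (j : ℕ) : ℤˣ := σ s(pageVertex i j, pageVertex i (j + 1))

end Signs

variable (σ : Sym2 (BookVertex m n k) → ℤˣ)

-- Colours at the tails of the arcs: `c a` on the spine at `v_{a+1}`, `g i j` on the `j`-th edge
-- of the `i`-th page, and `t i` on its last edge at `v_k`.
noncomputable def bookColoring (c : ℕ → ℤ) (t : Fin n → ℤ) (g : Fin n → ℕ → ℤ) :
    BookVertex m n k → BookVertex m n k → ℤ :=
  orientedColoring σ (bookArc m n k) fun
    | Sum.inl a, Sum.inl _ => c a
    | Sum.inl a, Sum.inr (i, _) => if (a : ℕ) = 0 then g i 0 else t i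
    | Sum.inr (i, j), Sum.inr _ => g i (j + 1)
    | Sum.inr _, Sum.inl _ => 0

variable {σ} {c : ℕ → ℤ} {t : Fin n → ℤ} {g : Fin n → ℕ → ℤ}

theorem bookColoring_inl_inl_of_succ {a b : Fin k} (h : (b : ℕ) = a + 1) :
    bookColoring σ c t g (Sum.inl a) (Sum.inl b) = c a :=
  orientedColoring_of_arc h

theorem bookColoring_inl_inl_of_pred [NeZero k] {a b : Fin k} (h : (a : ℕ) = b + 1) :
    bookColoring σ c t g (Sum.inl a) (Sum.inl b) = -(spineSign σ b : ℤ) * c b := by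
  have hb : Fin.ofNat k b = b := by simp
  have ha : Fin.ofNat k ((b : ℕ) + 1) = a :=
    Fin.ext (by rw [Fin.val_ofNat, ← h, Nat.mod_eq_of_lt a.isLt])
  rw [bookColoring,
    orientedColoring_of_not_arc (show ¬ bookArc m n k (Sum.inl a) (Sum.inl b) by
      simp only [bookArc]; omega),
    spineSign, hb, ha, Sym2.eq_swap]

theorem bookColoring_inl_inr {a : Fin k} {i : Fin n} {j : Fin (m - k)}
    (h : bookArc m n k (Sum.inl a) (Sum.inr (i, j))) :
    bookColoring σ c t g (Sum.inl a) (Sum.inr (i, j)) = if (a : ℕ) = 0 then g i 0 else t i :=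
  orientedColoring_of_arc h

theorem bookColoring_inr_inl_of_start [NeZero k] {a : Fin k} {i : Fin n} {j : Fin (m - k)}
    (ha : (a : ℕ) = 0) (hj : (j : ℕ) = 0) :
    bookColoring σ c t g (Sum.inr (i, j)) (Sum.inl a) = -(pageSign σ i 0 : ℤ) * g i 0 := by
  have ha' : a = 0 := Fin.ext ha
  rw [bookColoring, orientedColoring_of_not_arc id, pageSign, pageVertex_zero, ← ha', Sym2.eq_swap,
    pageVertex_eq_inr i j (by omega)]
  dsimp only
  rw [if_pos ha]

theorem bookColoring_inr_inl_of_finish [NeZero k] (hk : 2 ≤ k) {a : Fin k} {i : Fin n}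
    {j : Fin (m - k)} (ha : (a : ℕ) = k - 1) (hj : (j : ℕ) = m - k - 1) :
    bookColoring σ c t g (Sum.inr (i, j)) (Sum.inl a) = -(pageSign σ i (m - k) : ℤ) * t i := by
  have ha' : Fin.ofNat k (k - 1) = a :=
    Fin.ext (by rw [Fin.val_ofNat, Nat.mod_eq_of_lt (by omega), ha])
  rw [bookColoring, orientedColoring_of_not_arc id, pageSign, pageVertex_last, ha',
    pageVertex_eq_inr i j (by omega)]
  dsimp only
  rw [if_neg (by omega)]

theorem bookColoring_inr_inr_of_succ {i : Fin n} {j j' : Fin (m - k)} (h : (j' : ℕ) = j + 1) :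
    bookColoring σ c t g (Sum.inr (i, j)) (Sum.inr (i, j')) = g i (j + 1) :=
  orientedColoring_of_arc ⟨rfl, h⟩

theorem bookColoring_inr_inr_of_pred [NeZero k] {i : Fin n} {j j' : Fin (m - k)}
    (h : (j : ℕ) = j' + 1) :
    bookColoring σ c t g (Sum.inr (i, j)) (Sum.inr (i, j')) = -(pageSign σ i j : ℤ) * g i j := by
  rw [bookColoring,
    orientedColoring_of_not_arc (show ¬ bookArc m n k (Sum.inr (i, j)) (Sum.inr (i, j')) by
      simp only [bookArc]; omega), pageSign,
    pageVertex_eq_inr i j' h, pageVertex_eq_inr i j rfl, Sym2.eq_swap, h]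

theorem bookColoring_ne_at_inl [NeZero k] (hk : 2 ≤ k)
    (hc : ∀ j, c (j + 1) ≠ -(spineSign σ j : ℤ) * c j)
    (hstart : ∀ i, g i 0 ≠ c 0) (hstart_inj : Function.Injective fun i => g i 0)
    (hfinish : ∀ i, t i ≠ -(spineSign σ (k - 2) : ℤ) * c (k - 2))
    (hfinish_inj : Function.Injective t) {a : Fin k} {w₁ w₂ : BookVertex m n k}
    (h₁ : (bookGraph m n k).Adj (Sum.inl a) w₁) (h₂ : (bookGraph m n k).Adj (Sum.inl a) w₂)
    (hne : w₁ ≠ w₂) :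
    bookColoring σ c t g (Sum.inl a) w₁ ≠ bookColoring σ c t g (Sum.inl a) w₂ := by
  wlog hw : w₁.isLeft ∨ w₂.isRight generalizing w₁ w₂
  · exact (this h₂ h₁ hne.symm (by cases w₁ <;> cases w₂ <;> simp_all)).symm
  rcases w₁ with b₁ | ⟨i₁, j₁⟩ <;> rcases w₂ with b₂ | ⟨i₂, j₂⟩
  · rw [bookGraph_adj_inl_inl] at h₁ h₂
    rcases h₁ with h₁ | h₁ <;> rcases h₂ with h₂ | h₂
    · exact absurd (congrArg Sum.inl (Fin.ext (h₁.trans h₂.symm))) hne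
    · rw [bookColoring_inl_inl_of_succ h₁, bookColoring_inl_inl_of_pred h₂, h₂]
      exact hc _
    · rw [bookColoring_inl_inl_of_pred h₁, bookColoring_inl_inl_of_succ h₂, h₁]
      exact (hc _).symm
    · exact absurd (congrArg Sum.inl (Fin.ext (by omega))) hne
  · rw [bookGraph_adj_inl_inl] at h₁
    rw [bookGraph_adj_inl_inr] at h₂
    rw [bookColoring_inl_inr h₂]
    rcases h₂ with ⟨ha, -⟩ | ⟨ha, -⟩
    · rw [if_pos ha, bookColoring_inl_inl_of_succ (by omega), ha]
      exact (hstart i₂).symm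
    · rw [if_neg (by omega), bookColoring_inl_inl_of_pred (by omega),
        show (b₁ : ℕ) = k - 2 by omega]
      exact (hfinish i₂).symm
  · simp at hw
  · rw [bookGraph_adj_inl_inr] at h₁ h₂
    rw [bookColoring_inl_inr h₁, bookColoring_inl_inr h₂]
    have hi (hj : (j₁ : ℕ) = j₂) : i₁ ≠ i₂ := fun h => hne (by rw [h, Fin.ext hj])
    rcases h₁ with ⟨ha, hj₁⟩ | ⟨ha, hj₁⟩ <;> rcases h₂ with ⟨ha', hj₂⟩ | ⟨ha', hj₂⟩
    · rw [if_pos ha, if_pos ha]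
      exact fun h => hi (hj₁.trans hj₂.symm) (hstart_inj h)
    · omega
    · omega
    · rw [if_neg (by omega), if_neg (by omega)]
      exact fun h => hi (hj₁.trans hj₂.symm) (hfinish_inj h)

theorem bookColoring_ne_at_inr [NeZero k] (hk : 2 ≤ k)
    (hg : ∀ i j, g i (j + 1) ≠ -(pageSign σ i j : ℤ) * g i j)
    (hlast : ∀ i, -(pageSign σ i (m - k - 1) : ℤ) * g i (m - k - 1) ≠
      -(pageSign σ i (m - k) : ℤ) * t i)
    {i : Fin n} {j : Fin (m - k)} {w₁ w₂ : BookVertex m n k}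
    (h₁ : (bookGraph m n k).Adj (Sum.inr (i, j)) w₁)
    (h₂ : (bookGraph m n k).Adj (Sum.inr (i, j)) w₂) (hne : w₁ ≠ w₂) :
    bookColoring σ c t g (Sum.inr (i, j)) w₁ ≠ bookColoring σ c t g (Sum.inr (i, j)) w₂ := by
  wlog hw : w₁.isLeft ∨ w₂.isRight generalizing w₁ w₂
  · exact (this h₂ h₁ hne.symm (by cases w₁ <;> cases w₂ <;> simp_all)).symm
  rcases w₁ with b₁ | ⟨i₁, j₁⟩ <;> rcases w₂ with b₂ | ⟨i₂, j₂⟩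
  · rw [bookGraph_adj_inr_inl] at h₁ h₂
    have hb : (b₁ : ℕ) ≠ b₂ := fun h => hne (congrArg Sum.inl (Fin.ext h))
    rcases h₁ with ⟨hb₁, hj₁⟩ | ⟨hb₁, hj₁⟩ <;> rcases h₂ with ⟨hb₂, hj₂⟩ | ⟨hb₂, hj₂⟩
    · omega
    · rw [bookColoring_inr_inl_of_start hb₁ hj₁, bookColoring_inr_inl_of_finish hk hb₂ hj₂]
      simpa only [show m - k - 1 = 0 by omega] using hlast i
    · rw [bookColoring_inr_inl_of_finish hk hb₁ hj₁, bookColoring_inr_inl_of_start hb₂ hj₂]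
      simpa only [show m - k - 1 = 0 by omega] using (hlast i).symm
    · omega
  · rw [bookGraph_adj_inr_inl] at h₁
    rw [bookGraph_adj_inr_inr] at h₂
    obtain ⟨rfl, hj₂⟩ := h₂
    rcases h₁ with ⟨hb₁, hj₁⟩ | ⟨hb₁, hj₁⟩
    · rw [bookColoring_inr_inl_of_start hb₁ hj₁, bookColoring_inr_inr_of_succ (by omega), hj₁]
      exact (hg i 0).symm
    · have hj₂ : (j : ℕ) = j₂ + 1 := by have := j₂.isLt; omega
      rw [bookColoring_inr_inl_of_finish hk hb₁ hj₁, bookColoring_inr_inr_of_pred hj₂, hj₁]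
      exact (hlast i).symm
  · simp at hw
  · rw [bookGraph_adj_inr_inr] at h₁ h₂
    obtain ⟨rfl, hj₁⟩ := h₁
    obtain ⟨rfl, hj₂⟩ := h₂
    have hj : (j₁ : ℕ) ≠ j₂ := fun h => hne (by rw [Fin.ext h])
    rcases hj₁ with hj₁ | hj₁ <;> rcases hj₂ with hj₂ | hj₂
    · omega
    · rw [bookColoring_inr_inr_of_succ hj₁, bookColoring_inr_inr_of_pred hj₂]
      exact hg i j
    · rw [bookColoring_inr_inr_of_pred hj₁, bookColoring_inr_inr_of_succ hj₂]
      exact (hg i j).symm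
    · omega

theorem isProperSignedEdgeColoring_bookColoring [NeZero k] (hk : 2 ≤ k) {q : ℕ}
    (hc_mem : ∀ j, c j ∈ colorSet q) (hc : ∀ j, c (j + 1) ≠ -(spineSign σ j : ℤ) * c j)
    (hstart : ∀ i, g i 0 ≠ c 0) (hstart_inj : Function.Injective fun i => g i 0)
    (ht_mem : ∀ i, t i ∈ colorSet q)
    (hfinish : ∀ i, t i ≠ -(spineSign σ (k - 2) : ℤ) * c (k - 2))
    (hfinish_inj : Function.Injective t)
    (hg_mem : ∀ i j, g i j ∈ colorSet q) (hg : ∀ i j, g i (j + 1) ≠ -(pageSign σ i j : ℤ) * g i j)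
    (hlast : ∀ i, -(pageSign σ i (m - k - 1) : ℤ) * g i (m - k - 1) ≠
      -(pageSign σ i (m - k) : ℤ) * t i) :
    IsProperSignedEdgeColoring (bookGraph m n k) σ q (bookColoring σ c t g) := by
  rw [bookGraph_eq_fromRel]
  refine isProperSignedEdgeColoring_orientedColoring bookArc_asymm ?_ ?_
  · rintro (a | ⟨i, j⟩) (b | ⟨i', j'⟩) h
    · exact hc_mem a
    · dsimp only
      split_ifs
      exacts [hg_mem i' 0, ht_mem i']
    · exact h.elim
    · exact hg_mem i _
  · rintro (a | ⟨i, j⟩) w₁ w₂ h₁ h₂ hne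
    · exact bookColoring_ne_at_inl hk hc hstart hstart_inj hfinish hfinish_inj h₁ h₂ hne
    · exact bookColoring_ne_at_inr hk hg hlast h₁ h₂ hne

theorem exists_isProperSignedEdgeColoring_bookGraph (hn : 2 ≤ n) (hk : 2 ≤ k) (hmk : 1 ≤ m - k)
    (σ : Sym2 (BookVertex m n k) → ℤˣ) :
    ∃ γ, IsProperSignedEdgeColoring (bookGraph m n k) σ (n + 1) γ := by
  have : NeZero k := ⟨by omega⟩
  have hq : 3 ≤ n + 1 := by omega
  have h_one : (1 : ℤ) ∈ colorSet (n + 1) := by simp [colorSet]; omega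
  obtain ⟨c, hc₀, hc⟩ := exists_signed_walk_coloring hq (spineSign σ) 0 h_one
  obtain ⟨a, ha_inj, ha, i₀, i₁, hi⟩ := exists_injective_colorSet_ne_one hn
  -- `t i` must avoid `f i` when the pages have a single inner vertex.
  let f : Fin n → ℤ := fun i => -(pageSign σ i 1 : ℤ) * (-(pageSign σ i 0 : ℤ) * a i)
  have hf : f i₀ ≠ f i₁ := fun h => hi (by simpa [f, Int.natAbs_mul] using congrArg Int.natAbs h)
  have hS₁ : Fintype.card (Fin n) ≤
      #((colorFinset (n + 1)).erase (-(spineSign σ (k - 2) : ℤ) * c (k - 2))) := by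
    rw [card_erase_of_mem (mem_colorFinset.mpr (neg_units_mul_mem_colorSet _ (hc _).1)),
      card_colorFinset, Fintype.card_fin, Nat.add_sub_cancel]
  obtain ⟨t, ht_inj, ht⟩ := exists_injective_forall_mem_ne _ f hS₁ ⟨i₀, i₁, hf⟩
  choose g hg₀ hg_mem hg hlast using fun i => exists_signed_path_coloring hq (pageSign σ i)
    (ha i).1 (t i) hmk fun _ h => (ht i).2 ((neg_units_mul_eq_iff _).mp h.symm)
  refine ⟨_, isProperSignedEdgeColoring_bookColoring hk (fun j => (hc j).1) (fun j => (hc j).2.1)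
    (fun i => ?_) (fun i j h => ?_) (fun i => mem_colorFinset.mp (mem_of_mem_erase (ht i).1))
    (fun i => ne_of_mem_erase (ht i).1) ht_inj hg_mem hg hlast⟩
  · rw [hg₀, hc₀]
    exact (ha i).2
  · exact ha_inj (by simpa only [hg₀] using h)

theorem le_degree_bookGraph (hk : 2 ≤ k) (hmk : 1 ≤ m - k) :
    n + 1 ≤ (bookGraph m n k).degree (Sum.inl ⟨0, by omega⟩) := by
  rw [← card_neighborFinset_eq_degree]
  calc n + 1 = #(insert (Sum.inl ⟨1, hk⟩)
        (univ.image fun i => (Sum.inr (i, ⟨0, hmk⟩) : BookVertex m n k))) := by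
        rw [card_insert_of_notMem (by simp),
          card_image_of_injective _ fun _ _ h => by simpa using h, card_univ, Fintype.card_fin]
    _ ≤ _ := card_le_card fun w hw => by
        rw [mem_neighborFinset]
        simp only [mem_insert, mem_image, mem_univ, true_and] at hw
        rcases hw with rfl | ⟨i, rfl⟩
        · exact bookGraph_adj_inl_inl.mpr (Or.inl rfl)
        · exact bookGraph_adj_inl_inr.mpr (Or.inl ⟨rfl, rfl⟩)

end Book

theorem book_class_one_general (m n k : ℕ) (hn : 2 ≤ n) (hk : 2 ≤ k)
    (hmk : 1 ≤ m - k) (σ : Sym2 (BookVertex m n k) → ℤˣ) :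
    signedChromaticIndex (bookGraph m n k) σ = n + 1 ∧
    (bookGraph m n k).maxDegree = n + 1 := by
  obtain ⟨γ, hγ⟩ := exists_isProperSignedEdgeColoring_bookGraph hn hk hmk σ
  have hΔ : (bookGraph m n k).maxDegree = n + 1 :=
    le_antisymm hγ.maxDegree_le ((le_degree_bookGraph hk hmk).trans (degree_le_maxDegree _ _))
  rw [← hΔ] at hγ
  exact ⟨(signedChromaticIndex_eq_maxDegree hγ).trans hΔ, hΔ⟩

/-- For all `m ≥ 3`, `n ≥ 2`, `k ≥ 2` with `m - k ≥ 1` and every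
signature `σ`, the signed generalized book graph `(B(m,n,k), σ)` has chromatic index
`n + 1 = Δ(B(m,n,k))`: every signed generalized book graph is class 1. -/
theorem book_class_one (m n k : ℕ) (hm : 3 ≤ m) (hn : 2 ≤ n) (hk : 2 ≤ k)
    (hmk : 1 ≤ m - k) (σ : Sym2 (BookVertex m n k) → ℤˣ) :
    signedChromaticIndex (bookGraph m n k) σ = n + 1 ∧
    (bookGraph m n k).maxDegree = n + 1 :=
  book_class_one_general m n k hn hk hmk σ
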